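/- Let I be a weakly stable monomial ideal of R = K[X_1,...,X_n]. Then its saturation satisfies I^sat = I : X_n^∞, i.e., the saturation of I with respect to the maximal graded ideal equals the union over k ≥ 1 of (I : X_n^k). -/

import Mathlib

open MvPolynomial DirectSum

namespace LC

abbrev Poly (n : ℕ) (K : Type) [Field K] := MvPolynomial (Fin n) K

variable {n : ℕ} {K : Type} [Field K]

/-- The degree `d` piece of `R/I` as a `K`-subspace (zero in negative degrees). -/
noncomputable def pieceQ (I : Ideal (Poly n K)) (d : ℤ) : Submodule K (Poly n K ⧸ I) :=
  if 0 ≤ d then (homogeneousSubmodule (Fin n) K d.toNat).map (I.mkQ.restrictScalars K) else ⊥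

/-- The Hilbert function of `R/I`. -/
noncomputable def hilbQ (I : Ideal (Poly n K)) (d : ℤ) : ℕ :=
  Module.finrank K (pieceQ I d)

noncomputable def xProd (S : Finset (Fin n)) : Poly n K := ∏ i ∈ S, X i

noncomputable def mulQ (I : Ideal (Poly n K)) (c : Poly n K) :
    (Poly n K ⧸ I) →ₗ[Poly n K] (Poly n K ⧸ I) := LinearMap.lsmul _ _ c

/-- The localization of `R/I` at the product of the variables in `S`, realized as the direct
limit of the system `R/I → R/I → ⋯` of multiplication maps. -/
abbrev LS (I : Ideal (Poly n K)) (S : Finset (Fin n)) : Type :=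
  Module.DirectLimit (R := Poly n K) (fun _ : ℕ => Poly n K ⧸ I)
    (fun k k' _ => mulQ I (xProd S ^ (k' - k)))

noncomputable instance (I : Ideal (Poly n K)) (S : Finset (Fin n)) : Module K (LS I S) :=
  Module.compHom _ (algebraMap K (Poly n K))

instance (I : Ideal (Poly n K)) (S : Finset (Fin n)) : IsScalarTower K (Poly n K) (LS I S) :=
  ⟨fun k r m => by
    show (k • r) • m = (algebraMap K (Poly n K) k) • (r • m)
    rw [Algebra.smul_def, mul_smul]⟩

noncomputable instance (I : Ideal (Poly n K)) (S : Finset (Fin n)) : AddCommGroup (LS I S) :=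
  Module.DirectLimit.addCommGroup _ _

/-- The canonical map from the `k`-th copy of `R/I` into the localization. -/
noncomputable abbrev ofLS (I : Ideal (Poly n K)) (S : Finset (Fin n)) (k : ℕ) :
    (Poly n K ⧸ I) →ₗ[Poly n K] LS I S :=
  Module.DirectLimit.of (Poly n K) ℕ (fun _ : ℕ => Poly n K ⧸ I)
    (fun k k' _ => mulQ I (xProd S ^ (k' - k))) k

/-- The degree `j` piece of the localization (elements `m/xS^k` with `m` of degree
`j + k·|S|`). -/
noncomputable def pieceLS (I : Ideal (Poly n K)) (S : Finset (Fin n)) (j : ℤ) :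
    Submodule K (LS I S) :=
  ⨆ k : ℕ, (pieceQ I (j + k * S.card)).map ((ofLS I S k).restrictScalars K)

/-- The natural map between localizations corresponding to `S ⊆ insert i S`. -/
noncomputable def toInsert (I : Ideal (Poly n K)) (S : Finset (Fin n)) (i : Fin n)
    (hi : i ∉ S) : LS I S →ₗ[Poly n K] LS I (insert i S) :=
  Module.DirectLimit.lift _ _ _ _
    (fun k => (ofLS I (insert i S) k) ∘ₗ mulQ I (X i ^ k)) (by
      intro k k' hkk' x
      dsimp only [LinearMap.comp_apply]
      obtain ⟨d, rfl⟩ := Nat.exists_eq_add_of_le hkk'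
      have hf : ofLS I (insert i S) k (mulQ I (X i ^ k) x)
          = ofLS I (insert i S) (k + d) (mulQ I (xProd (insert i S) ^ (k + d - k))
              (mulQ I (X i ^ k) x)) :=
        (Module.DirectLimit.of_f (R := Poly n K) (ι := ℕ)
          (G := fun _ : ℕ => Poly n K ⧸ I)
          (f := fun k k' _ => mulQ I (xProd (insert i S) ^ (k' - k)))
          (hij := Nat.le_add_right k d) (x := mulQ I (X i ^ k) x)).symm
      rw [hf]
      congr 1
      simp only [mulQ, LinearMap.lsmul_apply, smul_smul]
      congr 1
      simp only [xProd, Finset.prod_insert hi, Nat.add_sub_cancel_left, mul_pow, pow_add]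
      ring)

/-- The index set of the `p`-th term of the Čech complex. -/
abbrev Idx (n p : ℕ) := {S : Finset (Fin n) // S.card = p}

/-- The `p`-th term of the Čech complex of `R/I` on the variables. -/
abbrev cech (I : Ideal (Poly n K)) (p : ℕ) : Type :=
  ⨁ S : Idx n p, LS I S.1

noncomputable instance (I : Ideal (Poly n K)) (p : ℕ) : AddCommGroup (cech I p) := inferInstance

/-- The Čech differential. -/
noncomputable def cechD (I : Ideal (Poly n K)) (p : ℕ) :
    cech I p →ₗ[Poly n K] cech I (p + 1) :=
  DirectSum.toModule _ _ _ (fun S =>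
    ∑ i ∈ ((Finset.univ : Finset (Fin n)) \ S.1).attach,
      ((-1 : ℤ) ^ (S.1.filter (· < i.1)).card) •
        ((DirectSum.lof (Poly n K) (Idx n (p + 1)) (fun T => LS I T.1)
            ⟨insert i.1 S.1, by
              rw [Finset.card_insert_of_notMem (Finset.mem_sdiff.mp i.2).2, S.2]⟩) ∘ₗ
          toInsert I S.1 i.1 (Finset.mem_sdiff.mp i.2).2))

/-- The degree `j` piece of the `p`-th Čech module. -/
noncomputable def pieceCech (I : Ideal (Poly n K)) (p : ℕ) (j : ℤ) :
    Submodule K (cech I p) :=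
  ⨆ S : Idx n p,
    (pieceLS I S.1 j).map
      ((DirectSum.lof (Poly n K) (Idx n p) (fun T => LS I T.1) S).restrictScalars K)

/-- Degree `j` cocycles in homological degree `i`. -/
noncomputable def cocycles (I : Ideal (Poly n K)) (i : ℕ) (j : ℤ) :
    Submodule K (cech I i) :=
  pieceCech I i j ⊓ LinearMap.ker ((cechD I i).restrictScalars K)

/-- Degree `j` coboundaries in homological degree `i`. -/
noncomputable def boundaries (I : Ideal (Poly n K)) (i : ℕ) (j : ℤ) :
    Submodule K (cech I i) :=
  match i with
  | 0 => ⊥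
  | i + 1 => (pieceCech I i j).map ((cechD I i).restrictScalars K)

/-- The degree `j` piece of the `i`-th local cohomology module `H^i_𝔪(R/I)`, computed via the
Čech complex on the variables. -/
abbrev lcPiece (I : Ideal (Poly n K)) (i : ℕ) (j : ℤ) : Type :=
  cocycles I i j ⧸ Submodule.comap (cocycles I i j).subtype (boundaries I i j)

/-- `h I i j = dim_K H^i_𝔪(R/I)_j`, the Hilbert function of local cohomology. -/
noncomputable def h (I : Ideal (Poly n K)) (i : ℕ) (j : ℤ) : ℕ :=
  Module.finrank K (lcPiece I i j)

/-! ### Further notions: saturation, monomial/lex/weakly stable ideals, Gin,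
dimension filtration, Cohen–Macaulayness -/

/-- The maximal graded ideal `(X_1, …, X_n)`. -/
noncomputable def mIdeal : Ideal (Poly n K) := Ideal.span (Set.range X)

/-- Saturation `I : 𝔪^∞`. -/
noncomputable def sat (I : Ideal (Poly n K)) : Ideal (Poly n K) :=
  ⨆ k : ℕ, Submodule.colon I ((mIdeal ^ k : Ideal (Poly n K)) : Set (Poly n K))

/-- Saturation `I : x^∞` with respect to a single element. -/
noncomputable def satX (x : Poly n K) (I : Ideal (Poly n K)) : Ideal (Poly n K) :=
  ⨆ k : ℕ, Submodule.colon I ((Ideal.span {x ^ k} : Ideal (Poly n K)) : Set (Poly n K))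

/-- A homogeneous ideal. -/
def IsHomog (I : Ideal (Poly n K)) : Prop :=
  ∀ f ∈ I, ∀ d : ℕ, (homogeneousComponent d f : Poly n K) ∈ I

/-- A monomial ideal. -/
def IsMonomialIdeal (I : Ideal (Poly n K)) : Prop :=
  ∀ f ∈ I, ∀ a ∈ f.support, (monomial a (1 : K)) ∈ I

/-- total degree of an exponent vector -/
def degE (a : Fin n →₀ ℕ) : ℕ := a.sum fun _ e => e

/-- The lexicographic order (with `X 0 > X 1 > ⋯`): `a <lex b`. -/
def lexLt (a b : Fin n →₀ ℕ) : Prop :=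
  ∃ i : Fin n, (∀ j : Fin n, j < i → a j = b j) ∧ a i < b i

/-- A lex(-segment) ideal. -/
def IsLexSegIdeal (L : Ideal (Poly n K)) : Prop :=
  IsMonomialIdeal L ∧
    ∀ a b : Fin n →₀ ℕ, degE a = degE b → monomial a (1 : K) ∈ L → lexLt a b →
      monomial b (1 : K) ∈ L

/-- `L = I^lex`: `L` is the lex ideal with the same Hilbert function as `I`. -/
def IsLexOf (I L : Ideal (Poly n K)) : Prop :=
  IsLexSegIdeal L ∧ ∀ d : ℤ, hilbQ I d = hilbQ L d

/-- `a ≤ b` in the degree reverse lexicographic order. -/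
def degRevLexLE (a b : Fin n →₀ ℕ) : Prop :=
  a = b ∨ degE a < degE b ∨
    (degE a = degE b ∧ ∃ i : Fin n, b i < a i ∧ ∀ j : Fin n, i < j → a j = b j)

/-- `a` is the leading exponent of `f` with respect to the order `le`. -/
def IsLeadExp (le : (Fin n →₀ ℕ) → (Fin n →₀ ℕ) → Prop) (f : Poly n K)
    (a : Fin n →₀ ℕ) : Prop :=
  a ∈ f.support ∧ ∀ b ∈ f.support, le b a

/-- The initial ideal of `I` with respect to the order `le`. -/
noncomputable def initialIdeal (le : (Fin n →₀ ℕ) → (Fin n →₀ ℕ) → Prop)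
    (I : Ideal (Poly n K)) : Ideal (Poly n K) :=
  Ideal.span {q | ∃ f ∈ I, ∃ a, IsLeadExp le f a ∧ q = monomial a (1 : K)}

/-- The linear change of coordinates associated with a matrix `g`. -/
noncomputable def subst (g : Fin n → Fin n → K) : Poly n K →ₐ[K] Poly n K :=
  aeval (fun i => ∑ j : Fin n, (C (g i j)) * X j)

/-- `J` is the generic initial ideal (reverse lexicographic order) of `I`: for all `g` in a
nonempty Zariski-open set of invertible matrices, `in_revlex (g • I) = J`. -/
def IsGin (I J : Ideal (Poly n K)) : Prop :=
  ∃ p : MvPolynomial (Fin n × Fin n) K, p ≠ 0 ∧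
    (∃ g : Fin n → Fin n → K, eval (fun q => g q.1 q.2) p ≠ 0) ∧
    ∀ g : Fin n → Fin n → K, eval (fun q => g q.1 q.2) p ≠ 0 →
      IsUnit (Matrix.of g).det ∧
        initialIdeal degRevLexLE (I.map (subst g)) = J

/-- `m(u)`: the largest variable index occurring in the monomial `u = X^a`. -/
noncomputable def maxVar (a : Fin n →₀ ℕ) (ha : a.support.Nonempty) : Fin n :=
  a.support.max' ha

/-- A weakly stable (Borel-type) monomial ideal. -/
def WeaklyStable (I : Ideal (Poly n K)) : Prop :=
  IsMonomialIdeal I ∧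
    ∀ a : Fin n →₀ ℕ, monomial a (1 : K) ∈ I → ∀ ha : a.support.Nonempty,
      ∀ j : Fin n, j < maxVar a ha →
        ∃ k : ℕ, monomial (Finsupp.erase (maxVar a ha) a + Finsupp.single j k) (1 : K) ∈ I

section DimFiltration

variable (P : Type) [CommRing P]

/-- The (Krull) dimension of a module. -/
noncomputable def mdim (M : Type) [AddCommGroup M] [Module P M] : WithBot (WithTop ℕ) :=
  ringKrullDim (P ⧸ Module.annihilator P M)

variable (M : Type) [AddCommGroup M] [Module P M]

/-- `dimFil M k` is the largest submodule of `M` of dimension at most `k`. -/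
noncomputable def dimFil (k : ℕ) : Submodule P M :=
  sSup {N : Submodule P M | mdim P N ≤ (k : WithBot (WithTop ℕ))}

/-- The predecessor filtration (`dimFil (k-1)`, with `M_{-1} = 0`). -/
noncomputable def dimFilPrev : ℕ → Submodule P M
  | 0 => ⊥
  | k + 1 => dimFil P M k

/-- The `k`-th quotient `M_k/M_{k-1}` of the dimension filtration. -/
noncomputable abbrev dimLayer (k : ℕ) : Type :=
  dimFil P M k ⧸ Submodule.comap (dimFil P M k).subtype (dimFilPrev P M k)

/-- A module is Cohen–Macaulay of dimension `k` iff it has dimension `k` and all its local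
cohomology (with support in the maximal graded ideal `J`) vanishes away from degree `k`. -/
noncomputable def IsCMofDim (J : Ideal P) (k : ℕ) (N : Type) [AddCommGroup N]
    [Module P N] : Prop :=
  mdim P N = (k : WithBot (WithTop ℕ)) ∧
    ∀ i : ℕ, i ≠ k → Subsingleton ((localCohomology J i).obj (ModuleCat.of P N))

/-- `M` is `i`-partially sequentially Cohen–Macaulay (with respect to the maximal graded
ideal `J`): each quotient of the dimension filtration in the range `i ≤ k ≤ dim M` is zero
or Cohen–Macaulay of dimension `k`. -/
noncomputable def IsPSCM (J : Ideal P) (i : ℕ) : Prop :=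
  ∀ k : ℕ, i ≤ k → (k : WithBot (WithTop ℕ)) ≤ mdim P M →
    Subsingleton (dimLayer P M k) ∨ IsCMofDim P J k (dimLayer P M k)

end DimFiltration

/-- `I^⟨k⟩`: the preimage in `R` of the `k`-th step of the dimension filtration of `R/I`. -/
noncomputable def satDim (I : Ideal (Poly n K)) (k : ℕ) : Ideal (Poly n K) :=
  Submodule.comap I.mkQ (dimFil (Poly n K) (Poly n K ⧸ I) k)

/-- `I^⟨k-1⟩` (so `I^⟨-1⟩ = I` when `k = 0`). -/
noncomputable def satDimPrev (I : Ideal (Poly n K)) (k : ℕ) : Ideal (Poly n K) :=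
  Submodule.comap I.mkQ (dimFilPrev (Poly n K) (Poly n K ⧸ I) k)

/-- The degree `d` piece of an ideal, as a `K`-subspace of the polynomial ring. -/
noncomputable def pieceI (J : Ideal (Poly n K)) (d : ℤ) : Submodule K (Poly n K) :=
  if 0 ≤ d then (Submodule.restrictScalars K J) ⊓ (homogeneousSubmodule (Fin n) K d.toNat)
  else ⊥

/-- The Hilbert function, in degree `j`, of the `k`-th unmixed layer
`U_k(R/I) = I^⟨k⟩/I^⟨k-1⟩`. -/
noncomputable def hilbLayer (I : Ideal (Poly n K)) (k : ℕ) (j : ℤ) : ℕ :=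
  Module.finrank K
    ((pieceI (satDim I k) j) ⧸
      Submodule.comap (pieceI (satDim I k) j).subtype (pieceI (satDimPrev I k) j))

/-- `R/I` and `R/L` have the same Björner–Wachs polynomial: all unmixed layers have the same
Hilbert functions. -/
def SameBW (I L : Ideal (Poly n K)) : Prop :=
  ∀ (k : ℕ) (j : ℤ), hilbLayer I k j = hilbLayer L k j

/-- Graded depth: the least homological degree in which local cohomology does not vanish. -/
noncomputable def gdepth (I : Ideal (Poly n K)) : ℕ :=
  sInf {i : ℕ | ∃ j : ℤ, h I i j ≠ 0}

/-- Restriction `I ∩ K[X_1, …, X_m]` of an ideal to a smaller polynomial ring. -/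
noncomputable def restr (m : ℕ) (hm : m ≤ n) (I : Ideal (Poly n K)) : Ideal (Poly m K) :=
  Ideal.comap (rename (Fin.castLE hm) : Poly m K →ₐ[K] Poly n K) I

/-- Two ideals (in possibly different polynomial rings) have the same Hilbert polynomial iff
their Hilbert functions eventually agree. -/
def SameHilbPoly {m m' : ℕ} (I : Ideal (Poly m K)) (I' : Ideal (Poly m' K)) : Prop :=
  ∃ N : ℤ, ∀ j : ℤ, N ≤ j → hilbQ I j = hilbQ I' j

/-- A universal lex ideal: a lex ideal generated by at most `n` elements. -/
def IsUniversalLex (L : Ideal (Poly n K)) : Prop :=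
  IsLexSegIdeal L ∧ ∃ s : Finset (Poly n K), s.card ≤ n ∧ Ideal.span (s : Set (Poly n K)) = L

/-- A critical ideal: its Hilbert function is that of a universal lex ideal. -/
def IsCritical (I : Ideal (Poly n K)) : Prop :=
  ∃ L : Ideal (Poly n K), IsUniversalLex L ∧ ∀ d : ℤ, hilbQ I d = hilbQ L d

/-- One consecutive cancellation: for some `i` and `j`, decrease `c i j` and `c (i+1) j`
by one. -/
def CancelStep (c c' : ℕ → ℤ → ℕ) : Prop :=
  ∃ (i : ℕ) (j : ℤ), c i j = c' i j + 1 ∧ c (i + 1) j = c' (i + 1) j + 1 ∧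
    ∀ (i' : ℕ) (j' : ℤ), j' ≠ j ∨ (i' ≠ i ∧ i' ≠ i + 1) → c i' j' = c' i' j'

/-- `c'` is obtained from `c` by a finite sequence of consecutive cancellations. -/
def ObtainedByCancellations (c c' : ℕ → ℤ → ℕ) : Prop :=
  Relation.ReflTransGen CancelStep c c'

end LC

/-! If `f * X_l ^ k ∈ I` for the last variable `X_l`, then every monomial `u` of `f` has
`u * X_l ^ k ∈ I`, and weak stability moves the power of `X_l` onto any other variable:
`u * X_j ^ M ∈ I` for every `j`. So every variable lies in the radical of `I : u`, and as `𝔪` is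
finitely generated, some power of `𝔪` lies in `I : u`. -/

theorem Ideal.exists_mem_colon_pow_of_le_radical {R : Type*} [CommSemiring R] {I J : Ideal R}
    {f : R} (hJ : J.FG) (h : J ≤ (I.colon {f}).radical) :
    ∃ N : ℕ, f ∈ I.colon ((J ^ N : Ideal R) : Set R) := by
  obtain ⟨N, hN⟩ := Ideal.exists_pow_le_of_le_radical_of_fg h hJ
  refine ⟨N, Submodule.mem_colon.2 fun s hs => ?_⟩
  simpa [mul_comm] using hN hs

namespace LC

open MvPolynomial

variable {n : ℕ} {K : Type} [Field K] {I : Ideal (Poly n K)}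

theorem mem_of_forall_monomial_mem {J : Ideal (Poly n K)} {f : Poly n K}
    (h : ∀ b ∈ f.support, monomial b (1 : K) ∈ J) : f ∈ J := by
  rw [f.as_sum]
  refine J.sum_mem fun b hb => ?_
  rw [← mul_one (coeff b f), ← C_mul_monomial]
  exact J.mul_mem_left _ (h b hb)

theorem mem_sat_of_forall_exists_mul_X_pow_mem {f : Poly n K}
    (h : ∀ j, ∃ M : ℕ, f * X j ^ M ∈ I) : f ∈ sat I := by
  have hm : (mIdeal : Ideal (Poly n K)) ≤ (I.colon {f}).radical :=
    Ideal.span_le.2 <| Set.range_subset_iff.2 fun j => by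
      obtain ⟨M, hM⟩ := h j
      exact ⟨M, by simpa [mul_comm] using hM⟩
  obtain ⟨N, hN⟩ :=
    Ideal.exists_mem_colon_pow_of_le_radical (Submodule.fg_span (Set.finite_range X)) hm
  exact Submodule.mem_iSup_of_mem N hN

theorem sat_le_satX (I : Ideal (Poly n K)) (i : Fin n) : sat I ≤ satX (X i) I :=
  iSup_mono fun k => Submodule.colon_mono le_rfl <| Ideal.span_le.2 <|
    Set.singleton_subset_iff.2 <| Ideal.pow_mem_pow (Ideal.subset_span (Set.mem_range_self i)) k

theorem IsMonomialIdeal.monomial_add_single_mem (hI : IsMonomialIdeal I) {f : Poly n K}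
    {i : Fin n} {k : ℕ} (hf : f * X i ^ k ∈ I) {b : Fin n →₀ ℕ} (hb : b ∈ f.support) :
    monomial (b + Finsupp.single i k) (1 : K) ∈ I := by
  refine hI _ hf _ ?_
  rw [mem_support_iff, X_pow_eq_monomial, coeff_mul_monomial, mul_one]
  exact mem_support_iff.1 hb

theorem maxVar_add_single_of_isTop {l : Fin n} (hl : IsTop l) {b : Fin n →₀ ℕ} {k : ℕ}
    (hk : k ≠ 0) (ha : (b + Finsupp.single l k).support.Nonempty) :
    maxVar (b + Finsupp.single l k) ha = l :=
  le_antisymm (hl _) <| Finset.le_max' _ _ <| by simp [hk]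

theorem WeaklyStable.exists_monomial_mul_X_pow_mem (hI : WeaklyStable I) {l : Fin n}
    (hl : IsTop l) {b : Fin n →₀ ℕ} {k : ℕ}
    (hb : monomial (b + Finsupp.single l k) (1 : K) ∈ I) (j : Fin n) :
    ∃ M : ℕ, monomial b (1 : K) * X j ^ M ∈ I := by
  simp_rw [X_pow_eq_monomial, monomial_mul, mul_one]
  rcases eq_or_ne k 0 with rfl | hk
  · exact ⟨0, by simpa using hb⟩
  rcases (hl j).eq_or_lt with rfl | hj
  · exact ⟨k, hb⟩
  have ha : (b + Finsupp.single l k).support.Nonempty := ⟨l, by simp [hk]⟩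
  have hmax := maxVar_add_single_of_isTop hl hk ha
  obtain ⟨M, hM⟩ := hI.2 _ hb ha j (by rwa [hmax])
  rw [hmax] at hM
  refine ⟨M, ?_⟩
  have hsplit : b + Finsupp.single j M =
      (Finsupp.erase l (b + Finsupp.single l k) + Finsupp.single j M) +
        Finsupp.single l (b l) := by
    rw [Finsupp.erase_add, Finsupp.erase_single, add_zero, add_right_comm,
      Finsupp.erase_add_single]
  rw [hsplit, ← mul_one (1 : K), ← monomial_mul]
  exact I.mul_mem_right _ hM

theorem WeaklyStable.satX_le_sat (hI : WeaklyStable I) {l : Fin n} (hl : IsTop l) :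
    satX (X l) I ≤ sat I :=
  iSup_le fun _ _ hf => mem_of_forall_monomial_mem fun _ hb =>
    mem_sat_of_forall_exists_mul_X_pow_mem <| hI.exists_monomial_mul_X_pow_mem hl <|
      hI.1.monomial_add_single_mem (Ideal.mem_colon_span_singleton.1 hf) hb

end LC

open LC MvPolynomial in
/-- The saturation of a weakly stable monomial ideal can be computed by
saturating with respect to the last variable. -/
theorem weaklyStable_sat_eq_satX {n : ℕ} {K : Type} [Field K] (hn : 0 < n)
    (I : Ideal (Poly n K)) (hI : WeaklyStable I) :
    sat I = satX (X (⟨n - 1, by omega⟩ : Fin n)) I :=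
  le_antisymm (sat_le_satX I _) <|
    hI.satX_le_sat fun i => Fin.le_def.2 (Nat.le_sub_one_of_lt i.isLt)
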